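/- Let H be a Hopf algebra over a commutative ring k and X a (left-left) Hopf module over H, i.e. a left H-module and left H-comodule with δ(h·x) = h₍₁₎ x₍₋₁₎ ⊗ h₍₂₎·x₍₀₎. Then Π(x) = S(x₍₋₁₎)·x₍₀₎ is an idempotent endomorphism of X whose image is contained in the submodule of left coinvariants {x ∈ X : δ(x) = 1 ⊗ x}, and the multiplication map H ⊗ Xᶜᵒ → X, h ⊗ x ↦ h·x, is an isomorphism of Hopf modules (the fundamental theorem of Hopf modules). -/

import Mathlib

open TensorProduct

noncomputable section

universe u

/-- A finite-sum representation of an element of a tensor product. -/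
structure TRepr (R : Type u) [CommRing R] {M N : Type u} [AddCommGroup M] [Module R M]
    [AddCommGroup N] [Module R N] (t : M ⊗[R] N) where
  ι : Type u
  index : Finset ι
  fst : ι → M
  snd : ι → N
  eq : ∑ i ∈ index, fst i ⊗ₜ[R] snd i = t

section Defs

variable (R : Type u) [CommRing R] (H : Type u) [Ring H] [HopfAlgebra R H]

/-- The comultiplication of `H` as a linear map. -/
def Δm : H →ₗ[R] H ⊗[R] H := Coalgebra.comul

/-- The counit of `H`. -/
def εm : H →ₗ[R] R := Coalgebra.counit

/-- The antipode of `H`. -/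
def Sm : H →ₗ[R] H := HopfAlgebra.antipode (R := R) (A := H)

/-- The multiplication of `H` as a linear map on the tensor square. -/
def mm : H ⊗[R] H →ₗ[R] H := LinearMap.mul' R H

/-- A right-right Yetter–Drinfeld (crossed) module over the Hopf algebra `H`:
a right `H`-module and right `H`-comodule `X` satisfying the compatibility
`δ(x ◁ h) = (x₍₀₎ ◁ h₍₂₎) ⊗ S(h₍₁₎) x₍₁₎ h₍₃₎` (stated for every Sweedler
representation of the iterated comultiplication of `h` and of the coaction of `x`). -/
structure YD (X : Type u) [AddCommGroup X] [Module R X] where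
  act : X ⊗[R] H →ₗ[R] X
  coact : X →ₗ[R] X ⊗[R] H
  act_one : ∀ x : X, act (x ⊗ₜ[R] 1) = x
  act_mul : ∀ (x : X) (g h : H), act (x ⊗ₜ[R] (g * h)) = act (act (x ⊗ₜ[R] g) ⊗ₜ[R] h)
  coact_counit : ∀ x : X,
    (TensorProduct.rid R X) ((LinearMap.lTensor X (εm R H)) (coact x)) = x
  coact_coassoc : (TensorProduct.assoc R X H H).toLinearMap ∘ₗ
      LinearMap.rTensor H coact ∘ₗ coact = LinearMap.lTensor X (Δm R H) ∘ₗ coact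
  compat : ∀ (x : X) (h : H) {ι : Type*} (r : Coalgebra.Repr R h ι)
      {κ : ι → Type*} (r' : (i : ι) → Coalgebra.Repr R (r.right i) (κ i)) (c : TRepr R (coact x)),
      coact (act (x ⊗ₜ[R] h)) =
        ∑ i ∈ r.index, ∑ j ∈ (r' i).index, ∑ k ∈ c.index,
          act (c.fst k ⊗ₜ[R] (r' i).left j) ⊗ₜ[R]
            (Sm R H (r.left i) * c.snd k * (r' i).right j)

/-- A right `H`-module structure on `X` (action written as a linear map on `X ⊗ H`). -/
structure MAct (X : Type u) [AddCommGroup X] [Module R X] where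
  act : X ⊗[R] H →ₗ[R] X
  act_one : ∀ x : X, act (x ⊗ₜ[R] 1) = x
  act_mul : ∀ (x : X) (g h : H), act (x ⊗ₜ[R] (g * h)) = act (act (x ⊗ₜ[R] g) ⊗ₜ[R] h)

end Defs

section Maps

variable {R : Type u} [CommRing R] {H : Type u} [Ring H] [HopfAlgebra R H]
variable {X Y Z : Type u} [AddCommGroup X] [Module R X] [AddCommGroup Y] [Module R Y]
  [AddCommGroup Z] [Module R Z]

/-- The diagonal (tensor product) right action of `H` on `X ⊗ Y`:
`(x ⊗ y) ◁ h = (x ◁ h₍₁₎) ⊗ (y ◁ h₍₂₎)`. -/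
def dAct (aX : X ⊗[R] H →ₗ[R] X) (aY : Y ⊗[R] H →ₗ[R] Y) :
    (X ⊗[R] Y) ⊗[R] H →ₗ[R] X ⊗[R] Y :=
  TensorProduct.map aX aY ∘ₗ (TensorProduct.tensorTensorTensorComm R X Y H H).toLinearMap ∘ₗ
    LinearMap.lTensor (X ⊗[R] Y) (Δm R H)

/-- The codiagonal right coaction of `H` on `X ⊗ Y`:
`δ(x ⊗ y) = (x₍₀₎ ⊗ y₍₀₎) ⊗ y₍₁₎ x₍₁₎`. -/
def cCoact (cX : X →ₗ[R] X ⊗[R] H) (cY : Y →ₗ[R] Y ⊗[R] H) :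
    X ⊗[R] Y →ₗ[R] (X ⊗[R] Y) ⊗[R] H :=
  LinearMap.lTensor (X ⊗[R] Y) (mm R H ∘ₗ (TensorProduct.comm R H H).toLinearMap) ∘ₗ
    (TensorProduct.tensorTensorTensorComm R X H Y H).toLinearMap ∘ₗ TensorProduct.map cX cY

/-- The Yetter–Drinfeld braiding `Ψ(x ⊗ y) = y₍₀₎ ⊗ (x ◁ y₍₁₎)`. -/
def braid (aX : X ⊗[R] H →ₗ[R] X) (cY : Y →ₗ[R] Y ⊗[R] H) :
    X ⊗[R] Y →ₗ[R] Y ⊗[R] X :=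
  LinearMap.lTensor Y aX ∘ₗ (TensorProduct.assoc R Y X H).toLinearMap ∘ₗ
    LinearMap.rTensor H (TensorProduct.comm R X Y).toLinearMap ∘ₗ
    (TensorProduct.assoc R X Y H).symm.toLinearMap ∘ₗ LinearMap.lTensor X cY

/-- The candidate inverse braiding `Ψ⁻¹(y ⊗ x) = (x ◁ S'(y₍₁₎)) ⊗ y₍₀₎`
built from a map `S'` (intended to be the inverse of the antipode). -/
def braidInv (aX : X ⊗[R] H →ₗ[R] X) (cY : Y →ₗ[R] Y ⊗[R] H) (S' : H →ₗ[R] H) :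
    Y ⊗[R] X →ₗ[R] X ⊗[R] Y :=
  LinearMap.rTensor Y aX ∘ₗ (TensorProduct.comm R Y (X ⊗[R] H)).toLinearMap ∘ₗ
    LinearMap.lTensor Y (TensorProduct.comm R H X).toLinearMap ∘ₗ
    (TensorProduct.assoc R Y H X).toLinearMap ∘ₗ
    LinearMap.rTensor X (LinearMap.lTensor Y S') ∘ₗ LinearMap.rTensor X cY

/-- The square antipode `σ(x) = x₍₀₎ ◁ S(x₍₁₎)` of a crossed module. -/
def sqAnt (aX : X ⊗[R] H →ₗ[R] X) (cX : X →ₗ[R] X ⊗[R] H) : X →ₗ[R] X :=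
  aX ∘ₗ LinearMap.lTensor X (Sm R H) ∘ₗ cX

end Maps

section LeftDefs

variable (R : Type u) [CommRing R] (H : Type u) [Ring H] [HopfAlgebra R H]

/-- A left-left Hopf module over `H`: a left `H`-module and left `H`-comodule with
`δ(h·x) = h₍₁₎ x₍₋₁₎ ⊗ (h₍₂₎ · x₍₀₎)`. -/
structure HopfMod (X : Type u) [AddCommGroup X] [Module R X] where
  lact : H ⊗[R] X →ₗ[R] X
  lcoact : X →ₗ[R] H ⊗[R] X
  one_lact : ∀ x : X, lact ((1 : H) ⊗ₜ[R] x) = x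
  mul_lact : ∀ (g h : H) (x : X),
    lact ((g * h) ⊗ₜ[R] x) = lact (g ⊗ₜ[R] lact (h ⊗ₜ[R] x))
  counit_lcoact : ∀ x : X,
    (TensorProduct.lid R X) ((LinearMap.rTensor X (εm R H)) (lcoact x)) = x
  coassoc : (TensorProduct.assoc R H H X).toLinearMap ∘ₗ
      LinearMap.rTensor X (Δm R H) ∘ₗ lcoact = LinearMap.lTensor H lcoact ∘ₗ lcoact
  compat : lcoact ∘ₗ lact =
    TensorProduct.map (mm R H) lact ∘ₗ
      (TensorProduct.tensorTensorTensorComm R H H H X).toLinearMap ∘ₗ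
      TensorProduct.map (Δm R H) lcoact

/-- A left `H`-module structure (action as a linear map on `H ⊗ Y`). -/
structure LMod (Y : Type u) [AddCommGroup Y] [Module R Y] where
  a : H ⊗[R] Y →ₗ[R] Y
  one : ∀ y : Y, a ((1 : H) ⊗ₜ[R] y) = y
  mul : ∀ (g h : H) (y : Y), a ((g * h) ⊗ₜ[R] y) = a (g ⊗ₜ[R] a (h ⊗ₜ[R] y))

variable {R H}

variable {B C : Type u} [AddCommGroup B] [Module R B] [AddCommGroup C] [Module R C]

/-- The diagonal left action of `H` on `B ⊗ C`: `h ▷ (b ⊗ c) = (h₍₁₎ ▷ b) ⊗ (h₍₂₎ ▷ c)`. -/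
def dLAct (aB : H ⊗[R] B →ₗ[R] B) (aC : H ⊗[R] C →ₗ[R] C) :
    H ⊗[R] (B ⊗[R] C) →ₗ[R] B ⊗[R] C :=
  TensorProduct.map aB aC ∘ₗ (TensorProduct.tensorTensorTensorComm R H H B C).toLinearMap ∘ₗ
    LinearMap.rTensor (B ⊗[R] C) (Δm R H)

/-- The codiagonal left coaction of `H` on `B ⊗ C`: `δ(b ⊗ c) = b₍₋₁₎ c₍₋₁₎ ⊗ (b₍₀₎ ⊗ c₍₀₎)`. -/
def cLCoact (cB : B →ₗ[R] H ⊗[R] B) (cC : C →ₗ[R] H ⊗[R] C) :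
    B ⊗[R] C →ₗ[R] H ⊗[R] (B ⊗[R] C) :=
  LinearMap.rTensor (B ⊗[R] C) (mm R H) ∘ₗ
    (TensorProduct.tensorTensorTensorComm R H B H C).toLinearMap ∘ₗ TensorProduct.map cB cC

/-- The left Yetter–Drinfeld braiding `Ψ(b ⊗ c) = (b₍₋₁₎ ▷ c) ⊗ b₍₀₎`. -/
def lbraid (cB : B →ₗ[R] H ⊗[R] B) (aC : H ⊗[R] C →ₗ[R] C) :
    B ⊗[R] C →ₗ[R] C ⊗[R] B :=
  LinearMap.rTensor B aC ∘ₗ (TensorProduct.assoc R H C B).symm.toLinearMap ∘ₗ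
    LinearMap.lTensor H (TensorProduct.comm R B C).toLinearMap ∘ₗ
    (TensorProduct.assoc R H B C).toLinearMap ∘ₗ LinearMap.rTensor C cB

/-- A left-left Yetter–Drinfeld (crossed) module over `H`:
a left `H`-module and left `H`-comodule with
`h₍₁₎ b₍₋₁₎ ⊗ (h₍₂₎ ▷ b₍₀₎) = (h₍₁₎ ▷ b)₍₋₁₎ h₍₂₎ ⊗ (h₍₁₎ ▷ b)₍₀₎`. -/
structure LYD (R : Type u) [CommRing R] (H : Type u) [Ring H] [HopfAlgebra R H]
    (B : Type u) [AddCommGroup B] [Module R B] where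
  lact : H ⊗[R] B →ₗ[R] B
  lcoact : B →ₗ[R] H ⊗[R] B
  one_lact : ∀ b : B, lact ((1 : H) ⊗ₜ[R] b) = b
  mul_lact : ∀ (g h : H) (b : B),
    lact ((g * h) ⊗ₜ[R] b) = lact (g ⊗ₜ[R] lact (h ⊗ₜ[R] b))
  counit_lcoact : ∀ b : B,
    (TensorProduct.lid R B) ((LinearMap.rTensor B (εm R H)) (lcoact b)) = b
  coassoc : (TensorProduct.assoc R H H B).toLinearMap ∘ₗ
      LinearMap.rTensor B (Δm R H) ∘ₗ lcoact = LinearMap.lTensor H lcoact ∘ₗ lcoact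
  compat :
    TensorProduct.map (mm R H) lact ∘ₗ
        (TensorProduct.tensorTensorTensorComm R H H H B).toLinearMap ∘ₗ
        TensorProduct.map (Δm R H) lcoact =
      LinearMap.rTensor B (mm R H) ∘ₗ
        (TensorProduct.assoc R H H B).symm.toLinearMap ∘ₗ
        LinearMap.lTensor H (TensorProduct.comm R B H).toLinearMap ∘ₗ
        (TensorProduct.assoc R H B H).toLinearMap ∘ₗ
        LinearMap.rTensor H lcoact ∘ₗ LinearMap.rTensor H lact ∘ₗ
        (TensorProduct.assoc R H B H).symm.toLinearMap ∘ₗ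
        LinearMap.lTensor H (TensorProduct.comm R H B).toLinearMap ∘ₗ
        (TensorProduct.assoc R H H B).toLinearMap ∘ₗ
        LinearMap.rTensor B (Δm R H)

/-- The smash (cross) product multiplication on `B ⊗ H`:
`(b ⊗ h)(b' ⊗ h') = b (h₍₁₎ ▷ b') ⊗ h₍₂₎ h'`. -/
def smashMul (mB : B ⊗[R] B →ₗ[R] B) (aB : H ⊗[R] B →ₗ[R] B) :
    (B ⊗[R] H) ⊗[R] (B ⊗[R] H) →ₗ[R] B ⊗[R] H :=
  LinearMap.rTensor H mB ∘ₗ (TensorProduct.assoc R B B H).symm.toLinearMap ∘ₗ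
    LinearMap.lTensor B
      (TensorProduct.map aB (mm R H) ∘ₗ
        (TensorProduct.tensorTensorTensorComm R H H B H).toLinearMap ∘ₗ
        LinearMap.rTensor (B ⊗[R] H) (Δm R H)) ∘ₗ
    (TensorProduct.assoc R B H (B ⊗[R] H)).toLinearMap

/-- The smash (cross) coproduct comultiplication on `B ⊗ H`:
`Δ(b ⊗ h) = (b₍₁₎ ⊗ (b₍₂₎)₍₋₁₎ h₍₁₎) ⊗ ((b₍₂₎)₍₀₎ ⊗ h₍₂₎)`. -/
def smashComul (cmB : B →ₗ[R] B ⊗[R] B) (cB : B →ₗ[R] H ⊗[R] B) :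
    B ⊗[R] H →ₗ[R] (B ⊗[R] H) ⊗[R] (B ⊗[R] H) :=
  LinearMap.rTensor (B ⊗[R] H)
      (LinearMap.lTensor B (mm R H ∘ₗ (TensorProduct.comm R H H).toLinearMap) ∘ₗ
        (TensorProduct.assoc R B H H).toLinearMap) ∘ₗ
    (TensorProduct.assoc R (B ⊗[R] H) H (B ⊗[R] H)).symm.toLinearMap ∘ₗ
    LinearMap.lTensor (B ⊗[R] H) (TensorProduct.assoc R H B H).toLinearMap ∘ₗ
    (TensorProduct.tensorTensorTensorComm R B (H ⊗[R] B) H H).toLinearMap ∘ₗ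
    LinearMap.rTensor (H ⊗[R] H) (LinearMap.lTensor B cB) ∘ₗ
    TensorProduct.map cmB (Δm R H)

/-- The counit of the smash product: `ε(b ⊗ h) = ε_B(b) ε_H(h)`. -/
def smashCounit (ctB : B →ₗ[R] R) : B ⊗[R] H →ₗ[R] R :=
  LinearMap.mul' R R ∘ₗ TensorProduct.map ctB (εm R H)

/-- The antipode of the smash product:
`S(b ⊗ h) = (1 ⊗ S_H(b₍₋₁₎ h)) · (S_B(b₍₀₎) ⊗ 1)`. -/
def smashAnt (mB : B ⊗[R] B →ₗ[R] B) (aB : H ⊗[R] B →ₗ[R] B)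
    (antB : B →ₗ[R] B) (cB : B →ₗ[R] H ⊗[R] B) (oneB : B) :
    B ⊗[R] H →ₗ[R] B ⊗[R] H :=
  smashMul mB aB ∘ₗ
    TensorProduct.map (TensorProduct.mk R B H oneB) ((TensorProduct.mk R B H).flip 1) ∘ₗ
    TensorProduct.map (Sm R H ∘ₗ mm R H) antB ∘ₗ
    (TensorProduct.assoc R H H B).symm.toLinearMap ∘ₗ
    LinearMap.lTensor H (TensorProduct.comm R B H).toLinearMap ∘ₗ
    (TensorProduct.assoc R H B H).toLinearMap ∘ₗ
    LinearMap.rTensor H cB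

/-- A Hopf algebra `B` in the braided category of left-left Yetter–Drinfeld modules
over `H` (a braided Hopf algebra): `B` carries an algebra and a coalgebra structure,
all structure maps are morphisms of Yetter–Drinfeld modules, the comultiplication is
an algebra map with respect to the braided tensor product (the braiding
`Ψ(a ⊗ b) = (a₍₋₁₎ ▷ b) ⊗ a₍₀₎` appearing in the middle), and the antipode is a
convolution inverse of the identity. -/
structure BHopf (R : Type u) [CommRing R] (H : Type u) [Ring H] [HopfAlgebra R H]
    (B : Type u) [AddCommGroup B] [Module R B] (T : LYD R H B) where
  mulB : B ⊗[R] B →ₗ[R] B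
  oneB : B
  comulB : B →ₗ[R] B ⊗[R] B
  counitB : B →ₗ[R] R
  antB : B →ₗ[R] B
  mul_assoc : mulB ∘ₗ LinearMap.rTensor B mulB =
    mulB ∘ₗ LinearMap.lTensor B mulB ∘ₗ (TensorProduct.assoc R B B B).toLinearMap
  one_mul : ∀ b : B, mulB (oneB ⊗ₜ[R] b) = b
  mul_one : ∀ b : B, mulB (b ⊗ₜ[R] oneB) = b
  coassoc : (TensorProduct.assoc R B B B).toLinearMap ∘ₗ
      LinearMap.rTensor B comulB ∘ₗ comulB = LinearMap.lTensor B comulB ∘ₗ comulB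
  counit_left : ∀ b : B, (TensorProduct.lid R B) ((LinearMap.rTensor B counitB) (comulB b)) = b
  counit_right : ∀ b : B, (TensorProduct.rid R B) ((LinearMap.lTensor B counitB) (comulB b)) = b
  mulB_linear : mulB ∘ₗ dLAct T.lact T.lact = T.lact ∘ₗ LinearMap.lTensor H mulB
  mulB_colinear : T.lcoact ∘ₗ mulB = LinearMap.lTensor H mulB ∘ₗ cLCoact T.lcoact T.lcoact
  oneB_inv : ∀ h : H, T.lact (h ⊗ₜ[R] oneB) = εm R H h • oneB
  oneB_coinv : T.lcoact oneB = (1 : H) ⊗ₜ[R] oneB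
  comulB_linear : comulB ∘ₗ T.lact = dLAct T.lact T.lact ∘ₗ LinearMap.lTensor H comulB
  comulB_colinear : cLCoact T.lcoact T.lcoact ∘ₗ comulB = LinearMap.lTensor H comulB ∘ₗ T.lcoact
  counitB_linear : ∀ (h : H) (b : B), counitB (T.lact (h ⊗ₜ[R] b)) = εm R H h * counitB b
  counitB_colinear : ∀ b : B,
    (LinearMap.lTensor H counitB) (T.lcoact b) = (1 : H) ⊗ₜ[R] counitB b
  braided_bialg : comulB ∘ₗ mulB =
    TensorProduct.map mulB mulB ∘ₗ
      (TensorProduct.assoc R B B (B ⊗[R] B)).symm.toLinearMap ∘ₗ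
      LinearMap.lTensor B (TensorProduct.assoc R B B B).toLinearMap ∘ₗ
      LinearMap.lTensor B (LinearMap.rTensor B (lbraid T.lcoact T.lact)) ∘ₗ
      LinearMap.lTensor B (TensorProduct.assoc R B B B).symm.toLinearMap ∘ₗ
      (TensorProduct.assoc R B B (B ⊗[R] B)).toLinearMap ∘ₗ
      TensorProduct.map comulB comulB
  comulB_one : comulB oneB = oneB ⊗ₜ[R] oneB
  counitB_mul : ∀ a b : B, counitB (mulB (a ⊗ₜ[R] b)) = counitB a * counitB b
  counitB_one : counitB oneB = 1
  antB_left : ∀ b : B, mulB ((LinearMap.rTensor B antB) (comulB b)) = counitB b • oneB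
  antB_right : ∀ b : B, mulB ((LinearMap.lTensor B antB) (comulB b)) = counitB b • oneB

end LeftDefs

/-! `Π(x) = S(x₍₋₁₎)·x₍₀₎` lands in the coinvariants because the antipode is an
anti-coalgebra map, `Δ(S h) = S(h₍₂₎) ⊗ S(h₍₁₎)`: by coassociativity of the coaction,
`δ(Π x) = S(x₍₋₂₎) x₍₋₁₎ ⊗ S(x₍₋₃₎)·x₍₀₎ = 1 ⊗ Π x`. For a coinvariant `c` one has
`δ(h·c) = h₍₁₎ ⊗ h₍₂₎·c`, hence `Π(h·c) = ε(h) c`. So `x ↦ x₍₋₁₎ ⊗ Π(x₍₀₎)` is inverse to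
`h ⊗ c ↦ h·c`: one composite is `x₍₋₂₎ S(x₍₋₁₎)·x₍₀₎ = x`, the other `h₍₁₎ ⊗ ε(h₍₂₎) c = h ⊗ c`. -/

namespace Coalgebra

variable {R A : Type*} [CommSemiring R] [AddCommMonoid A] [Module R A] [Coalgebra R A]

lemma sum_counit_smul_right {a : A} {ι : Type*} (r : Repr R a ι) :
    ∑ i ∈ r.index, counit (R := R) (r.right i) • r.left i = a := by
  simpa only [map_sum, _root_.TensorProduct.rid_tmul, one_smul] using
    congr(_root_.TensorProduct.rid R A $(sum_tmul_counit_eq r))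

end Coalgebra

namespace HopfAlgebra
open Coalgebra WithConv
open scoped RingTheory.LinearMap

variable {R H : Type*} [CommSemiring R] [Semiring H] [HopfAlgebra R H]

lemma sum_antipode_tmul_one_mul_comul {a : H} {ι : Type*} (r : Repr R a ι) :
    ∑ i ∈ r.index, (antipode R (r.left i) ⊗ₜ[R] (1 : H)) * comul (r.right i) = 1 ⊗ₜ[R] a := by
  have coassoc := congr(TensorProduct.map (LinearMap.mul' R H ∘ₗ (antipode R).rTensor H) LinearMap.id
    ((TensorProduct.assoc R H H H).symm
      $(sum_tmul_tmul_eq r (fun i ↦ ℛ R (r.left i)) (fun i ↦ ℛ R (r.right i)))))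
  simp only [map_sum, TensorProduct.assoc_symm_tmul, TensorProduct.map_tmul, LinearMap.comp_apply,
    LinearMap.rTensor_tmul, LinearMap.mul'_apply, LinearMap.id_apply] at coassoc
  simp only [← TensorProduct.sum_tmul, sum_antipode_mul_eq_smul, TensorProduct.smul_tmul,
    ← TensorProduct.tmul_sum (1 : H), sum_counit_smul] at coassoc
  rw [coassoc]
  refine Finset.sum_congr rfl fun i _ ↦ ?_
  rw [← (ℛ R (r.right i)).eq, Finset.mul_sum]
  simp only [Algebra.TensorProduct.tmul_mul_tmul, one_mul]

lemma comul_left_inv : toConv ((antipode R ⊗ₘ antipode R) ∘ₗ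
    (TensorProduct.comm R H H).toLinearMap ∘ₗ comul) * toConv (comul (R := R) (A := H)) = 1 := by
  ext a
  let r := ℛ R a
  let r₁ := fun i ↦ ℛ R (r.left i)
  let r₂ := fun i ↦ ℛ R (r.right i)
  have coassoc := congr(LinearMap.mul' R (H ⊗[R] H)
    (TensorProduct.map ((antipode R ⊗ₘ antipode R) ∘ₗ (TensorProduct.comm R H H).toLinearMap)
      comul ((TensorProduct.assoc R H H H).symm $(sum_tmul_tmul_eq r r₁ r₂))))
  simp only [map_sum, TensorProduct.assoc_symm_tmul, TensorProduct.map_tmul, LinearMap.comp_apply,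
    LinearEquiv.coe_coe, TensorProduct.comm_tmul, LinearMap.mul'_apply] at coassoc
  have expand : ∀ i ∈ r.index,
      ((antipode R ⊗ₘ antipode R) ∘ₗ (TensorProduct.comm R H H).toLinearMap ∘ₗ comul) (r.left i) *
        comul (r.right i) =
      ∑ j ∈ (r₁ i).index,
        (antipode R ((r₁ i).right j) ⊗ₜ[R] antipode R ((r₁ i).left j)) * comul (r.right i) := by
    intro i _
    rw [LinearMap.comp_apply, LinearMap.comp_apply, ← (r₁ i).eq]
    simp [map_sum, Finset.sum_mul]
  have contract : ∀ i ∈ r.index,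
      ∑ j ∈ (r₂ i).index,
        (antipode R ((r₂ i).left j) ⊗ₜ[R] antipode R (r.left i)) * comul ((r₂ i).right j) =
      1 ⊗ₜ[R] (antipode R (r.left i) * r.right i) := by
    intro i _
    have h := congr((1 ⊗ₜ[R] antipode R (r.left i)) * $(sum_antipode_tmul_one_mul_comul (r₂ i)))
    simpa [Finset.mul_sum, ← mul_assoc, Algebra.TensorProduct.tmul_mul_tmul] using h
  rw [r.convMul_apply, Finset.sum_congr rfl expand, coassoc, Finset.sum_congr rfl contract,
    ← TensorProduct.tmul_sum, sum_antipode_mul_eq_smul]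
  simp [LinearMap.convOne_def, Algebra.algebraMap_eq_smul_one, TensorProduct.smul_tmul',
    Algebra.TensorProduct.one_def]

theorem comul_comp_antipode : comul ∘ₗ antipode R =
    (antipode R ⊗ₘ antipode R) ∘ₗ (TensorProduct.comm R H H).toLinearMap ∘ₗ
      comul (R := R) (A := H) :=
  congr(ofConv $((left_inv_eq_right_inv comul_left_inv LinearMap.comul_right_inv).symm))

lemma sum_comul_antipode_mul_tmul_one {a : H} {ι : Type*} (r : Repr R a ι) :
    ∑ i ∈ r.index, comul (antipode R (r.left i)) * (r.right i ⊗ₜ[R] (1 : H)) =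
      1 ⊗ₜ[R] antipode R a := by
  have coassoc := congr((TensorProduct.comm R H H) (TensorProduct.map (antipode R)
    (LinearMap.mul' R H ∘ₗ (antipode R).rTensor H)
      $(sum_tmul_tmul_eq r (fun i ↦ ℛ R (r.left i)) (fun i ↦ ℛ R (r.right i)))))
  simp only [map_sum, TensorProduct.map_tmul, LinearMap.comp_apply, TensorProduct.comm_tmul,
    LinearMap.rTensor_tmul, LinearMap.mul'_apply] at coassoc
  simp only [← TensorProduct.sum_tmul, sum_antipode_mul_eq_smul, TensorProduct.smul_tmul,
    ← map_smul, ← TensorProduct.tmul_sum (1 : H), ← map_sum, sum_counit_smul_right] at coassoc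
  rw [← coassoc]
  refine Finset.sum_congr rfl fun i _ ↦ ?_
  simp only [← LinearMap.comp_apply (g := antipode R), comul_comp_antipode, LinearMap.comp_apply,
    LinearEquiv.coe_coe, ← (ℛ R (r.left i)).eq, map_sum, TensorProduct.comm_tmul,
    TensorProduct.map_tmul, Finset.sum_mul, Algebra.TensorProduct.tmul_mul_tmul, mul_one]

end HopfAlgebra

namespace HopfMod
open Coalgebra HopfAlgebra LinearMap

variable {R H X : Type u} [CommRing R] [Ring H] [HopfAlgebra R H]
  [AddCommGroup X] [Module R X] (T : HopfMod R H X)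

def proj : X →ₗ[R] X := T.lact ∘ₗ rTensor X (Sm R H) ∘ₗ T.lcoact

def coinvariants : Submodule R X := ker (T.lcoact - TensorProduct.mk R H X 1)

def multiplication : H ⊗[R] T.coinvariants →ₗ[R] X :=
  T.lact ∘ₗ lTensor H T.coinvariants.subtype

def toSpanSingleton (x : X) : H →ₗ[R] X := T.lact ∘ₗ (TensorProduct.mk R H X).flip x

lemma toSpanSingleton_apply (x : X) (h : H) : T.toSpanSingleton x h = T.lact (h ⊗ₜ x) := rfl

lemma mem_coinvariants {x : X} : x ∈ T.coinvariants ↔ T.lcoact x = 1 ⊗ₜ x := by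
  simp [coinvariants, sub_eq_zero]

lemma proj_apply (x : X) : T.proj x = T.lact (rTensor X (antipode R) (T.lcoact x)) := rfl

lemma lTensor_lcoact_lcoact (x : X) :
    lTensor H T.lcoact (T.lcoact x) = TensorProduct.assoc R H H X (rTensor X comul (T.lcoact x)) :=
  congr($(T.coassoc) x).symm

lemma lcoact_lact (y : H ⊗[R] X) : T.lcoact (T.lact y) =
    TensorProduct.map (mul' R H) T.lact
      (TensorProduct.tensorTensorTensorComm R H H H X (TensorProduct.map comul T.lcoact y)) :=
  congr($(T.compat) y)

lemma lact_algebraMap_tmul (r : R) (x : X) : T.lact (algebraMap R H r ⊗ₜ x) = r • x := by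
  rw [Algebra.algebraMap_eq_smul_one, ← TensorProduct.smul_tmul', map_smul, T.one_lact]

lemma lact_rTensor_algebraMap_counit (y : H ⊗[R] X) :
    T.lact (rTensor X (Algebra.linearMap R H ∘ₗ counit) y) =
      TensorProduct.lid R X (rTensor X counit y) := by
  induction y using TensorProduct.induction_on with
  | zero => simp
  | tmul a x => simp [lact_algebraMap_tmul]
  | add y z hy hz => simp [hy, hz]

lemma lact_comp_lTensor_comp_assoc (f : H →ₗ[R] H) :
    T.lact ∘ₗ lTensor H (T.lact ∘ₗ rTensor X f) ∘ₗ (TensorProduct.assoc R H H X).toLinearMap =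
      T.lact ∘ₗ rTensor X (mul' R H ∘ₗ lTensor H f) :=
  TensorProduct.ext_threefold fun a b x ↦ by simp [T.mul_lact]

lemma lact_comp_map_toSpanSingleton (f : H →ₗ[R] H) (x : X) :
    T.lact ∘ₗ TensorProduct.map f (T.toSpanSingleton x) =
      T.toSpanSingleton x ∘ₗ mul' R H ∘ₗ rTensor H f :=
  TensorProduct.ext' fun a b ↦ by simp [toSpanSingleton_apply, T.mul_lact]

lemma lact_lTensor_proj_lcoact (x : X) : T.lact (lTensor H T.proj (T.lcoact x)) = x := calc
  _ = T.lact (lTensor H (T.lact ∘ₗ rTensor X (antipode R)) (lTensor H T.lcoact (T.lcoact x))) := by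
    rw [← lTensor_comp_apply]; rfl
  _ = T.lact (rTensor X (mul' R H ∘ₗ lTensor H (antipode R)) (rTensor X comul (T.lcoact x))) := by
    rw [lTensor_lcoact_lcoact]
    exact congr($(T.lact_comp_lTensor_comp_assoc (antipode R)) _)
  _ = x := by
    rw [← rTensor_comp_apply, comp_assoc, mul_antipode_lTensor_comul,
      lact_rTensor_algebraMap_counit]
    exact T.counit_lcoact x

lemma map_mul'_lact_tensorTensorTensorComm (t : H ⊗[R] H) (b : H) (x : X) :
    TensorProduct.map (mul' R H) T.lact
        (TensorProduct.tensorTensorTensorComm R H H H X (t ⊗ₜ (b ⊗ₜ x))) =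
      lTensor H T.lact (TensorProduct.assoc R H H X ((t * (b ⊗ₜ 1)) ⊗ₜ x)) := by
  induction t using TensorProduct.induction_on with
  | zero => simp
  | tmul a a' => simp
  | add t t' ht ht' => simp [add_mul, TensorProduct.add_tmul, ht, ht']

-- In Sweedler notation: `S(a₍₁₎)₍₁₎ a₍₂₎ ⊗ S(a₍₁₎)₍₂₎·x = 1 ⊗ S(a)·x`.
lemma map_mul'_lact_tensorTensorTensorComm_comul_antipode (y : H ⊗[R] X) :
    TensorProduct.map (mul' R H) T.lact (TensorProduct.tensorTensorTensorComm R H H H X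
        (rTensor (H ⊗[R] X) (comul ∘ₗ antipode R)
          (TensorProduct.assoc R H H X (rTensor X comul y)))) =
      1 ⊗ₜ T.lact (rTensor X (antipode R) y) := by
  induction y using TensorProduct.induction_on with
  | zero => simp
  | add y z hy hz => simp only [map_add, hy, hz, TensorProduct.tmul_add]
  | tmul a x =>
    rw [rTensor_tmul, ← (ℛ R a).eq]
    simp only [TensorProduct.sum_tmul, map_sum, TensorProduct.assoc_tmul, rTensor_tmul,
      comp_apply, map_mul'_lact_tensorTensorTensorComm]
    rw [← map_sum, ← map_sum, ← TensorProduct.sum_tmul, sum_comul_antipode_mul_tmul_one]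
    simp

lemma lcoact_proj (x : X) : T.lcoact (T.proj x) = 1 ⊗ₜ T.proj x := calc
  _ = TensorProduct.map (mul' R H) T.lact (TensorProduct.tensorTensorTensorComm R H H H X
        (rTensor (H ⊗[R] X) (comul ∘ₗ antipode R) (lTensor H T.lcoact (T.lcoact x)))) := by
    rw [proj_apply, lcoact_lact, map_rTensor, ← comp_apply (rTensor (H ⊗[R] X) _),
      rTensor_comp_lTensor]
  _ = 1 ⊗ₜ T.proj x := by
    rw [lTensor_lcoact_lcoact, map_mul'_lact_tensorTensorTensorComm_comul_antipode, proj_apply]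

lemma proj_mem_coinvariants (x : X) : T.proj x ∈ T.coinvariants :=
  T.mem_coinvariants.2 (T.lcoact_proj x)

lemma proj_of_mem_coinvariants {c : X} (hc : c ∈ T.coinvariants) : T.proj c = c := by
  rw [proj_apply, T.mem_coinvariants.1 hc, rTensor_tmul, antipode_one, T.one_lact]

lemma proj_comp_proj : T.proj ∘ₗ T.proj = T.proj :=
  LinearMap.ext fun x ↦ T.proj_of_mem_coinvariants (T.proj_mem_coinvariants x)

lemma lcoact_comp_toSpanSingleton {c : X} (hc : c ∈ T.coinvariants) :
    T.lcoact ∘ₗ T.toSpanSingleton c = lTensor H (T.toSpanSingleton c) ∘ₗ comul := by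
  ext h
  rw [comp_apply, toSpanSingleton_apply, lcoact_lact, TensorProduct.map_tmul,
    T.mem_coinvariants.1 hc, comp_apply, ← (ℛ R h).eq]
  simp [map_sum, TensorProduct.sum_tmul, toSpanSingleton_apply]

lemma proj_comp_toSpanSingleton {c : X} (hc : c ∈ T.coinvariants) :
    T.proj ∘ₗ T.toSpanSingleton c = LinearMap.toSpanSingleton R X c ∘ₗ counit := by
  ext h
  rw [comp_apply, proj_apply, ← comp_apply T.lcoact, T.lcoact_comp_toSpanSingleton hc,
    comp_apply, ← comp_apply (rTensor X _), rTensor_comp_lTensor, ← comp_apply T.lact,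
    lact_comp_map_toSpanSingleton]
  simp [mul_antipode_rTensor_comul_apply, toSpanSingleton_apply, lact_algebraMap_tmul]

def projCoinvariants : X →ₗ[R] T.coinvariants :=
  T.proj.codRestrict T.coinvariants T.proj_mem_coinvariants

lemma projCoinvariants_comp_toSpanSingleton (c : T.coinvariants) :
    T.projCoinvariants ∘ₗ T.toSpanSingleton c = LinearMap.toSpanSingleton R _ c ∘ₗ counit := by
  ext h
  simpa [projCoinvariants] using congr($(T.proj_comp_toSpanSingleton c.2) h)

def multiplicationEquiv : H ⊗[R] T.coinvariants ≃ₗ[R] X :=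
  LinearEquiv.ofLinearMap T.multiplication (lTensor H T.projCoinvariants ∘ₗ T.lcoact)
    (LinearMap.ext fun x ↦ by
      simp only [multiplication, comp_apply, ← lTensor_comp_apply]
      exact T.lact_lTensor_proj_lcoact x)
    (TensorProduct.ext' fun h c ↦ by
      simp only [multiplication, comp_apply, lTensor_tmul, Submodule.coe_subtype]
      rw [← toSpanSingleton_apply, ← comp_apply T.lcoact, T.lcoact_comp_toSpanSingleton c.2,
        comp_apply, ← lTensor_comp_apply, projCoinvariants_comp_toSpanSingleton,
        lTensor_comp_apply, lTensor_counit_comul]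
      simp)

lemma multiplication_comp_rTensor_mul' :
    T.multiplication ∘ₗ (rTensor T.coinvariants (mul' R H) ∘ₗ
        (TensorProduct.assoc R H H T.coinvariants).symm.toLinearMap) =
      T.lact ∘ₗ lTensor H T.multiplication :=
  TensorProduct.ext_threefold' fun g h c ↦ by simp [multiplication, T.mul_lact]

lemma lcoact_comp_multiplication :
    T.lcoact ∘ₗ T.multiplication = lTensor H T.multiplication ∘ₗ
      (TensorProduct.assoc R H H T.coinvariants).toLinearMap ∘ₗ rTensor T.coinvariants comul := by
  refine TensorProduct.ext' fun h c ↦ ?_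
  simp only [multiplication, comp_apply, lTensor_tmul, rTensor_tmul, Submodule.coe_subtype]
  rw [← toSpanSingleton_apply, ← comp_apply T.lcoact, T.lcoact_comp_toSpanSingleton c.2,
    comp_apply, ← (ℛ R h).eq]
  simp [map_sum, TensorProduct.sum_tmul, toSpanSingleton_apply]

end HopfMod

/-- Fundamental theorem of Hopf modules. For a left-left Hopf module `X` over a Hopf
algebra `H`, the map `Π(x) = S(x₍₋₁₎)·x₍₀₎` is an idempotent endomorphism of `X` whose
image lies in the coinvariants `Xᶜᵒ = {x : δ(x) = 1 ⊗ x}`, and the multiplication map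
`H ⊗ Xᶜᵒ → X`, `h ⊗ x ↦ h·x`, is an isomorphism of Hopf modules. -/
theorem stmt7 (R : Type u) [CommRing R] (H : Type u) [Ring H] [HopfAlgebra R H]
    (X : Type u) [AddCommGroup X] [Module R X] (T : HopfMod R H X) :
    let Pi : X →ₗ[R] X := T.lact ∘ₗ LinearMap.rTensor X (Sm R H) ∘ₗ T.lcoact
    let coinv : Submodule R X := LinearMap.ker (T.lcoact - TensorProduct.mk R H X 1)
    let Φ : H ⊗[R] ↥coinv →ₗ[R] X := T.lact ∘ₗ LinearMap.lTensor H coinv.subtype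
    -- `Π` is idempotent with image in the coinvariants
    Pi ∘ₗ Pi = Pi ∧ (∀ x : X, Pi x ∈ coinv) ∧
    -- the multiplication map is bijective
    Function.Bijective Φ ∧
    -- and a morphism of `H`-modules (`H ⊗ Xᶜᵒ` with the action by left multiplication)
    Φ ∘ₗ (LinearMap.rTensor (↥coinv) (mm R H) ∘ₗ
        (TensorProduct.assoc R H H (↥coinv)).symm.toLinearMap) =
      T.lact ∘ₗ LinearMap.lTensor H Φ ∧
    -- and a morphism of `H`-comodules (`H ⊗ Xᶜᵒ` with the coaction `Δ ⊗ id`)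
    T.lcoact ∘ₗ Φ =
      LinearMap.lTensor H Φ ∘ₗ (TensorProduct.assoc R H H (↥coinv)).toLinearMap ∘ₗ
        LinearMap.rTensor (↥coinv) (Δm R H) := by
  intro Pi coinv Φ
  exact ⟨T.proj_comp_proj, T.proj_mem_coinvariants, T.multiplicationEquiv.bijective,
    T.multiplication_comp_rTensor_mul', T.lcoact_comp_multiplication⟩
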